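/- Let n ≥ 1, let A : ℝ → ℝ^{n×n} and b : ℝ → ℝⁿ, and let P : ℝ → ℝ^{n×n} be differentiable with P(t) symmetric and c₁·I ⪯ P(t) ⪯ c₂·I for constants 0 < c₁ ≤ c₂ and all t (Loewner order). Let β > 0 and suppose that P'(t) + A(t)ᵀP(t) + P(t)A(t) ⪯ −2β·P(t) for all t. Then for any two differentiable solutions x₁, x₂ : ℝ → ℝⁿ of the time-varying affine system x'(t) = A(t)x(t) + b(t), one has ‖x₁(t) − x₂(t)‖ ≤ √(c₂/c₁) · e^{−β(t−t₀)} · ‖x₁(t₀) − x₂(t₀)‖ for all t ≥ t₀; i.e., the system is incrementally exponentially stable (contracting) with respect to the metric P. -/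

import Mathlib

/-!
The difference `e = x₁ - x₂` of two solutions solves the linear system `ė = A e`, and
`V = eᵀ P e` satisfies `V̇ = eᵀ (Ṗ + AᵀP + PA) e ≤ -2β V`. Grönwall gives
`V t ≤ e^{-2β(t - t₀)} V t₀`, and the bounds `c₁ I ⪯ P ⪯ c₂ I` turn this into the Euclidean
estimate.
-/

open Matrix

section Calculus

variable {𝕜 : Type*} [NontriviallyNormedField 𝕜] {ι : Type*} [Fintype ι] {t : 𝕜}

theorem HasDerivAt.dotProduct {u v : 𝕜 → ι → 𝕜} {u' v' : ι → 𝕜}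
    (hu : HasDerivAt u u' t) (hv : HasDerivAt v v' t) :
    HasDerivAt (fun s => u s ⬝ᵥ v s) (u' ⬝ᵥ v t + u t ⬝ᵥ v') t := by
  have h := HasDerivAt.fun_sum (u := Finset.univ) fun i _ =>
    (hasDerivAt_pi.mp hu i).fun_mul (hasDerivAt_pi.mp hv i)
  rw [Finset.sum_add_distrib] at h
  exact h

theorem HasDerivAt.mulVec {M : 𝕜 → Matrix ι ι 𝕜} {M' : Matrix ι ι 𝕜} {v : 𝕜 → ι → 𝕜}
    {v' : ι → 𝕜} (hM : ∀ i j, HasDerivAt (fun s => M s i j) (M' i j) t)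
    (hv : HasDerivAt v v' t) :
    HasDerivAt (fun s => M s *ᵥ v s) (M' *ᵥ v t + M t *ᵥ v') t :=
  hasDerivAt_pi.mpr fun i => by
    have h := HasDerivAt.fun_sum (u := Finset.univ) fun j _ =>
      (hM i j).fun_mul (hasDerivAt_pi.mp hv j)
    rw [Finset.sum_add_distrib] at h
    exact h

theorem HasDerivAt.sub_of_affine {x₁ x₂ : 𝕜 → ι → 𝕜} {A : Matrix ι ι 𝕜} {c : ι → 𝕜}
    (h₁ : HasDerivAt x₁ (A *ᵥ x₁ t + c) t) (h₂ : HasDerivAt x₂ (A *ᵥ x₂ t + c) t) :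
    HasDerivAt (fun s => x₁ s - x₂ s) (A *ᵥ (x₁ t - x₂ t)) t := by
  simpa [mulVec_sub] using h₁.fun_sub h₂

theorem HasDerivAt.dotProduct_mulVec_of_linear {e : 𝕜 → ι → 𝕜} {A : Matrix ι ι 𝕜}
    {P : 𝕜 → Matrix ι ι 𝕜} {P' : Matrix ι ι 𝕜} (he : HasDerivAt e (A *ᵥ e t) t)
    (hP : ∀ i j, HasDerivAt (fun s => P s i j) (P' i j) t) :
    HasDerivAt (fun s => e s ⬝ᵥ (P s *ᵥ e s)) (e t ⬝ᵥ ((P' + Aᵀ * P t + P t * A) *ᵥ e t)) t := by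
  convert he.dotProduct (HasDerivAt.mulVec hP he) using 1
  rw [add_mulVec, add_mulVec, ← mulVec_mulVec, ← mulVec_mulVec, dotProduct_add, dotProduct_add,
    dotProduct_mulVec (e t) Aᵀ, vecMul_transpose, dotProduct_add]
  ring

end Calculus

theorem le_mul_exp_of_hasDerivAt_le_mul {V V' : ℝ → ℝ} {K t₀ t : ℝ}
    (hV : ∀ s, HasDerivAt V (V' s) s) (hle : ∀ s, V' s ≤ K * V s) (ht : t₀ ≤ t) :
    V t ≤ V t₀ * Real.exp (K * (t - t₀)) := by
  have h := le_gronwallBound_of_liminf_deriv_right_le (f' := V') (δ := V t₀) (K := K) (ε := 0)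
    (b := t) (fun s _ => (hV s).continuousAt.continuousWithinAt)
    (fun s _ _ hr => (hV s).hasDerivWithinAt.liminf_right_slope_le hr) le_rfl
    (fun s _ => by simpa using hle s) t ⟨ht, le_rfl⟩
  rwa [gronwallBound_ε0] at h

section Loewner

variable {ι : Type*} [Fintype ι]

theorem Matrix.PosSemidef.dotProduct_mulVec_le {M N : Matrix ι ι ℝ} (h : (N - M).PosSemidef)
    (v : ι → ℝ) : v ⬝ᵥ (M *ᵥ v) ≤ v ⬝ᵥ (N *ᵥ v) := by
  simpa [sub_mulVec] using h.dotProduct_mulVec_nonneg v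

theorem Matrix.PosSemidef.smul_dotProduct_self_le [DecidableEq ι] {P : Matrix ι ι ℝ} {c : ℝ}
    (h : (P - c • 1).PosSemidef) (v : ι → ℝ) : c * (v ⬝ᵥ v) ≤ v ⬝ᵥ (P *ᵥ v) := by
  simpa [smul_mulVec] using h.dotProduct_mulVec_le v

theorem Matrix.PosSemidef.dotProduct_mulVec_le_smul_dotProduct_self [DecidableEq ι]
    {P : Matrix ι ι ℝ} {c : ℝ} (h : (c • 1 - P).PosSemidef) (v : ι → ℝ) :
    v ⬝ᵥ (P *ᵥ v) ≤ c * (v ⬝ᵥ v) := by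
  simpa [smul_mulVec] using h.dotProduct_mulVec_le v

end Loewner

theorem Real.sqrt_le_sqrt_div_mul_mul_sqrt {a b c₁ c₂ E : ℝ} (hc₁ : 0 < c₁) (hc₂ : 0 ≤ c₂)
    (hE : 0 ≤ E) (h : c₁ * a ≤ c₂ * E ^ 2 * b) : √a ≤ √(c₂ / c₁) * E * √b := by
  have ha : a ≤ c₂ / c₁ * E ^ 2 * b := by
    rw [mul_assoc, div_mul_eq_mul_div, le_div_iff₀ hc₁, ← mul_assoc]; linarith
  calc √a ≤ √(c₂ / c₁ * E ^ 2 * b) := Real.sqrt_le_sqrt ha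
    _ = √(c₂ / c₁) * E * √b := by
      rw [Real.sqrt_mul (by positivity), Real.sqrt_mul (by positivity), Real.sqrt_sq hE]

theorem affine_system_incrementally_exponentially_stable_general
    {n : ℕ}
    (A : ℝ → Matrix (Fin n) (Fin n) ℝ) (b : ℝ → Fin n → ℝ)
    (P P' : ℝ → Matrix (Fin n) (Fin n) ℝ)
    (hPderiv : ∀ t i j, HasDerivAt (fun s => P s i j) (P' t i j) t)
    (c₁ c₂ : ℝ) (hc₁ : 0 < c₁) (hc₁₂ : c₁ ≤ c₂)
    (hPlb : ∀ t, (P t - c₁ • (1 : Matrix (Fin n) (Fin n) ℝ)).PosSemidef)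
    (hPub : ∀ t, (c₂ • (1 : Matrix (Fin n) (Fin n) ℝ) - P t).PosSemidef)
    (β : ℝ)
    (hLyap : ∀ t, ((-(2 * β)) • P t - (P' t + (A t)ᵀ * P t + P t * A t)).PosSemidef)
    (x₁ x₂ : ℝ → Fin n → ℝ)
    (hx₁ : ∀ t, HasDerivAt x₁ (A t *ᵥ x₁ t + b t) t)
    (hx₂ : ∀ t, HasDerivAt x₂ (A t *ᵥ x₂ t + b t) t) :
    ∀ t₀ t : ℝ, t₀ ≤ t →
      Real.sqrt ((x₁ t - x₂ t) ⬝ᵥ (x₁ t - x₂ t))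
        ≤ Real.sqrt (c₂ / c₁) * Real.exp (-β * (t - t₀)) *
            Real.sqrt ((x₁ t₀ - x₂ t₀) ⬝ᵥ (x₁ t₀ - x₂ t₀)) := by
  intro t₀ t ht
  set e := fun s => x₁ s - x₂ s
  set V := fun s => e s ⬝ᵥ (P s *ᵥ e s)
  have hV : ∀ s, HasDerivAt V (e s ⬝ᵥ ((P' s + (A s)ᵀ * P s + P s * A s) *ᵥ e s)) s :=
    fun s => ((hx₁ s).sub_of_affine (hx₂ s)).dotProduct_mulVec_of_linear (hPderiv s)
  have hdecay : V t ≤ V t₀ * Real.exp (-(2 * β) * (t - t₀)) :=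
    le_mul_exp_of_hasDerivAt_le_mul hV
      (fun s => by
        simpa only [smul_mulVec, dotProduct_smul, smul_eq_mul] using
          (hLyap s).dotProduct_mulVec_le (e s)) ht
  refine Real.sqrt_le_sqrt_div_mul_mul_sqrt hc₁ (hc₁.le.trans hc₁₂) (Real.exp_nonneg _) ?_
  calc c₁ * (e t ⬝ᵥ e t) ≤ V t := (hPlb t).smul_dotProduct_self_le (e t)
    _ ≤ V t₀ * Real.exp (-(2 * β) * (t - t₀)) := hdecay
    _ ≤ c₂ * (e t₀ ⬝ᵥ e t₀) * Real.exp (-(2 * β) * (t - t₀)) := by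
      gcongr; exact (hPub t₀).dotProduct_mulVec_le_smul_dotProduct_self (e t₀)
    _ = c₂ * Real.exp (-β * (t - t₀)) ^ 2 * (e t₀ ⬝ᵥ e t₀) := by
      rw [← Real.exp_nat_mul]; ring_nf

/-- a time-varying affine system satisfying the quadratic contraction condition
with metric `P(t)` is incrementally exponentially stable: any two solutions converge to each
other exponentially. -/
theorem affine_system_incrementally_exponentially_stable
    {n : ℕ} (hn : 1 ≤ n)
    (A : ℝ → Matrix (Fin n) (Fin n) ℝ) (b : ℝ → Fin n → ℝ)
    (P P' : ℝ → Matrix (Fin n) (Fin n) ℝ)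
    (hPderiv : ∀ t i j, HasDerivAt (fun s => P s i j) (P' t i j) t)
    (hPsymm : ∀ t, (P t).IsSymm)
    (c₁ c₂ : ℝ) (hc₁ : 0 < c₁) (hc₁₂ : c₁ ≤ c₂)
    (hPlb : ∀ t, (P t - c₁ • (1 : Matrix (Fin n) (Fin n) ℝ)).PosSemidef)
    (hPub : ∀ t, (c₂ • (1 : Matrix (Fin n) (Fin n) ℝ) - P t).PosSemidef)
    (β : ℝ) (hβ : 0 < β)
    (hLyap : ∀ t, ((-(2 * β)) • P t - (P' t + (A t)ᵀ * P t + P t * A t)).PosSemidef)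
    (x₁ x₂ : ℝ → Fin n → ℝ)
    (hx₁ : ∀ t, HasDerivAt x₁ (A t *ᵥ x₁ t + b t) t)
    (hx₂ : ∀ t, HasDerivAt x₂ (A t *ᵥ x₂ t + b t) t) :
    ∀ t₀ t : ℝ, t₀ ≤ t →
      Real.sqrt ((x₁ t - x₂ t) ⬝ᵥ (x₁ t - x₂ t))
        ≤ Real.sqrt (c₂ / c₁) * Real.exp (-β * (t - t₀)) *
            Real.sqrt ((x₁ t₀ - x₂ t₀) ⬝ᵥ (x₁ t₀ - x₂ t₀)) :=
  affine_system_incrementally_exponentially_stable_general A b P P' hPderiv c₁ c₂ hc₁ hc₁₂ hPlb hPub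
    β hLyap x₁ x₂ hx₁ hx₂
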